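/- arXiv:2205.11878 — 4 statements merged into one kernel-verified Lean document; each statement's English description precedes it below -/
import Mathlib

section
/- Let D ≥ 2 and n ≥ 1 be integers, f a natural number, and ε̄ > 0 a real number. Let x_1,…,x_n be integers with 0 ≤ x_i < D for all i, and let w_1,…,w_n and w'_1,…,w'_n be real numbers in [0,1]. Suppose there is a set S ⊆ {1,…,n} with |S| ≥ n − f such that w_i = w'_i for all i ∈ S, and that |w_i − w'_i| ≤ ε̄ for all i. Then d_D( ⌈Σ_{i=1}^n x_i·w_i⌉ mod D , ⌈Σ_{i=1}^n x_i·w'_i⌉ mod D ) ≤ ⌈ f·ε̄·D ⌉. -/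
/-- The cyclic distance between `x` and `y` in the ring `ℤ_q`:
`d_q(x, y) = min (|x - y|, q - |x - y|)`. -/
def cyclicDist (q x y : ℤ) : ℤ := min |x - y| (q - |x - y|)

lemma cyclicDist_mod_le (D a b : ℤ) (hD : 0 < D) :
    cyclicDist D (a % D) (b % D) ≤ |a - b| := by
  unfold cyclicDist
  have ha0 := Int.emod_nonneg a (by omega : D ≠ 0)
  have ha1 := Int.emod_lt_of_pos a hD
  have hb0 := Int.emod_nonneg b (by omega : D ≠ 0)
  have hb1 := Int.emod_lt_of_pos b hD
  set r := a % D - b % D with hr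
  have hab : a - b = r + D * (a / D - b / D) := by
    have h1 := Int.emod_add_mul_ediv a D
    have h2 := Int.emod_add_mul_ediv b D
    ring_nf
    omega
  set k := a / D - b / D with hk
  rcases eq_or_ne k 0 with h | h
  · rw [h] at hab; simp at hab
    rw [hab]; exact min_le_left _ _
  · have hk1 : 1 ≤ |k| := Int.one_le_abs h
    have h3 : |D * k| - |(-r)| ≤ |D * k - -r| := abs_sub_abs_le_abs_sub _ _
    rw [abs_neg, abs_mul, abs_of_pos hD, sub_neg_eq_add] at h3
    have h4 : D ≤ D * |k| := le_mul_of_one_le_right (le_of_lt hD) hk1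
    have h5 : |a - b| = |D * k + r| := by rw [hab]; ring_nf
    refine le_trans (min_le_right _ _) ?_
    omega

/-- Let `D ≥ 2` and `n ≥ 1` be integers, `f` a natural number, and `ε̄ > 0` a real.
Let `x_1, …, x_n` be integers with `0 ≤ x_i < D`, and let `w_1, …, w_n` and
`w'_1, …, w'_n` be reals in `[0,1]`.  If there is a set `S ⊆ {1,…,n}` with
`|S| ≥ n - f` such that `w_i = w'_i` for all `i ∈ S`, and `|w_i - w'_i| ≤ ε̄` for
all `i`, then
`d_D(⌈∑ x_i w_i⌉ mod D, ⌈∑ x_i w'_i⌉ mod D) ≤ ⌈f ε̄ D⌉`. -/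
theorem approx_consistency (D : ℤ) (hD : 2 ≤ D) (n : ℕ) (hn : 1 ≤ n) (f : ℕ)
    (ε : ℝ) (hε : 0 < ε)
    (x : Fin n → ℤ) (hx : ∀ i, 0 ≤ x i ∧ x i < D)
    (w w' : Fin n → ℝ)
    (hw : ∀ i, w i ∈ Set.Icc (0 : ℝ) 1) (hw' : ∀ i, w' i ∈ Set.Icc (0 : ℝ) 1)
    (S : Finset (Fin n)) (hS : n - f ≤ S.card) (hSeq : ∀ i ∈ S, w i = w' i)
    (hclose : ∀ i, |w i - w' i| ≤ ε) :
    cyclicDist D ((⌈∑ i, (x i : ℝ) * w i⌉) % D) ((⌈∑ i, (x i : ℝ) * w' i⌉) % D)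
      ≤ ⌈(f : ℝ) * ε * (D : ℝ)⌉ := by
  set A := ∑ i, (x i : ℝ) * w i with hA
  set B := ∑ i, (x i : ℝ) * w' i with hB
  have hDpos : (0:ℤ) < D := by omega
  have key : |A - B| ≤ (f : ℝ) * ε * (D : ℝ) := by
    have hsub : A - B = ∑ i ∈ Sᶜ, (x i : ℝ) * (w i - w' i) := by
      rw [hA, hB, ← Finset.sum_sub_distrib]
      rw [← Finset.sum_compl_add_sum S fun i => (x i : ℝ) * w i - (x i : ℝ) * w' i]
      have : ∑ i ∈ S, ((x i : ℝ) * w i - (x i : ℝ) * w' i) = 0 := by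
        apply Finset.sum_eq_zero
        intro i hi; rw [hSeq i hi]; ring
      rw [this, add_zero]
      apply Finset.sum_congr rfl
      intro i _; ring
    rw [hsub]
    calc |∑ i ∈ Sᶜ, (x i : ℝ) * (w i - w' i)|
        ≤ ∑ i ∈ Sᶜ, |(x i : ℝ) * (w i - w' i)| := Finset.abs_sum_le_sum_abs _ _
      _ ≤ ∑ _i ∈ Sᶜ, (D : ℝ) * ε := by
          apply Finset.sum_le_sum
          intro i _
          rw [abs_mul]
          have h1 : |(x i : ℝ)| ≤ (D : ℝ) := by
            rw [abs_of_nonneg (by exact_mod_cast (hx i).1)]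
            exact_mod_cast le_of_lt (hx i).2
          have h2 := hclose i
          have := abs_nonneg ((x i : ℝ))
          have := abs_nonneg (w i - w' i)
          nlinarith
      _ = (Sᶜ.card : ℝ) * ((D : ℝ) * ε) := by rw [Finset.sum_const, nsmul_eq_mul]
      _ ≤ (f : ℝ) * ε * (D : ℝ) := by
          have hc : Sᶜ.card ≤ f := by
            have := Finset.card_compl S
            simp [Finset.card_compl] at *
            omega
          have : (Sᶜ.card : ℝ) ≤ (f : ℝ) := by exact_mod_cast hc
          have hDR : (0:ℝ) < (D:ℝ) := by exact_mod_cast hDpos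
          have h6 := mul_le_mul_of_nonneg_right this (le_of_lt (mul_pos hDR hε))
          nlinarith [h6]
  have hceil : |⌈A⌉ - ⌈B⌉| ≤ ⌈(f : ℝ) * ε * (D : ℝ)⌉ := by
    have h1 : ⌈A⌉ - ⌈B⌉ ≤ ⌈(f : ℝ) * ε * (D : ℝ)⌉ := by
      have : ⌈A⌉ ≤ ⌈B⌉ + ⌈(f : ℝ) * ε * (D : ℝ)⌉ := by
        calc ⌈A⌉ ≤ ⌈B + (f : ℝ) * ε * (D : ℝ)⌉ := by
              apply Int.ceil_le_ceil
              have := abs_le.mp key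
              linarith [this.2]
          _ ≤ ⌈B⌉ + ⌈(f : ℝ) * ε * (D : ℝ)⌉ := Int.ceil_add_le _ _
      omega
    have h2 : ⌈B⌉ - ⌈A⌉ ≤ ⌈(f : ℝ) * ε * (D : ℝ)⌉ := by
      have : ⌈B⌉ ≤ ⌈A⌉ + ⌈(f : ℝ) * ε * (D : ℝ)⌉ := by
        calc ⌈B⌉ ≤ ⌈A + (f : ℝ) * ε * (D : ℝ)⌉ := by
              apply Int.ceil_le_ceil
              have := abs_le.mp key
              linarith [this.1]
          _ ≤ ⌈A⌉ + ⌈(f : ℝ) * ε * (D : ℝ)⌉ := Int.ceil_add_le _ _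
      omega
    exact abs_sub_le_iff.mpr ⟨h1, h2⟩
  calc cyclicDist D (⌈A⌉ % D) (⌈B⌉ % D) ≤ |⌈A⌉ - ⌈B⌉| := cyclicDist_mod_le D _ _ hDpos
    _ ≤ ⌈(f : ℝ) * ε * (D : ℝ)⌉ := hceil
end

section
/- Let n and f be natural numbers with f ≥ 1 and n ≥ 3f + 1, and let ε > 0 be a real number. Let w_1,…,w_n be real numbers in [0,1], and suppose there is a set S ⊆ {1,…,n} with |S| ≥ n − f such that w_i = 1 for all i ∈ S. Let T_1,…,T_n be independent random variables, each uniformly distributed on [0,1], and set X_i = w_i·T_i. Then the probability that there exist distinct indices i ≠ j with X_j = max_{1≤k≤n} X_k and X_i ≥ X_j − 2ε is at most 8nε. -/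
/-!
By the union bound over `i`, it suffices to show that `X_i ≤ M_i ≤ X_i + 2ε`, where
`M_i = max_{k ≠ i} X_k`, has probability at most `8ε`. As `T_i` is independent of `M_i`, condition
on `M_i = c`: then `T_i` lies in an interval of length `2ε / w_i`, and this is impossible for
`T_i ∈ [0,1]` unless `c ≤ w_i + 2ε`. That forces two unit-weight coordinates below `w_i + 2ε`,
an event of probability at most `(w_i + 2ε)²`, and `2ε / w_i · (w_i + 2ε)² ≤ 8ε` once
`w_i ≥ 2ε`; for `w_i < 2ε` already `(4ε)² ≤ 8ε` when `ε ≤ 1/2`, and for `ε > 1/2` there is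
nothing to prove.
-/

open MeasureTheory ProbabilityTheory Set
open scoped ENNReal

lemma ProbabilityTheory.IndepFun.measure_preimage_le_mul_of_slice_le
    {Ω α β : Type*} [MeasurableSpace Ω] [MeasurableSpace α] [MeasurableSpace β]
    {μ : Measure Ω} [IsFiniteMeasure μ] {X : Ω → α} {Y : Ω → β}
    (hXY : IndepFun X Y μ) (hX : Measurable X) (hY : Measurable Y)
    {s : Set (α × β)} (hs : MeasurableSet s) {V : Set β} (hV : MeasurableSet V) {b : ℝ≥0∞}
    (h_slice : ∀ y, μ.map X ((·, y) ⁻¹' s) ≤ b)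
    (h_slice_zero : ∀ y ∉ V, μ.map X ((·, y) ⁻¹' s) = 0) :
    μ ((fun ω ↦ (X ω, Y ω)) ⁻¹' s) ≤ b * μ (Y ⁻¹' V) := by
  rw [← Measure.map_apply (hX.prodMk hY) hs,
    hXY.map_prod_eq_prod_map_map hX.aemeasurable hY.aemeasurable, Measure.prod_apply_symm hs,
    ← Measure.map_apply hY hV, ← lintegral_indicator_const hV]
  refine lintegral_mono fun y ↦ ?_
  by_cases hy : y ∈ V
  · simpa [hy] using h_slice y
  · simp [hy, h_slice_zero y hy]

lemma Real.volume_setOf_mul_le_le_mul_add {w : ℝ} (hw : 0 < w) (c δ : ℝ) :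
    volume {t : ℝ | w * t ≤ c ∧ c ≤ w * t + δ} = ENNReal.ofReal (δ / w) := by
  have : {t : ℝ | w * t ≤ c ∧ c ≤ w * t + δ} = Icc ((c - δ) / w) (c / w) := by
    ext t
    simp only [mem_ofPred_eq, mem_Icc, div_le_iff₀ hw, le_div_iff₀ hw]
    constructor <;> rintro ⟨h₁, h₂⟩ <;> constructor <;> linarith
  rw [this, Real.volume_Icc, ← sub_div, sub_sub_self]

lemma measure_preimage_Iic_le_of_map_eq_uniform {Ω : Type*} [MeasurableSpace Ω] {μ : Measure Ω}
    {U : Ω → ℝ} (hU : Measurable U) (hU_unif : μ.map U = volume.restrict (Icc 0 1)) (c : ℝ) :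
    μ (U ⁻¹' Iic c) ≤ ENNReal.ofReal c := by
  rw [← Measure.map_apply hU measurableSet_Iic, hU_unif, Measure.restrict_apply measurableSet_Iic]
  calc volume (Iic c ∩ Icc 0 1) ≤ volume (Icc 0 c) :=
        measure_mono fun x ⟨hxc, hx0, _⟩ ↦ ⟨hx0, hxc⟩
    _ = ENNReal.ofReal c := by rw [Real.volume_Icc, sub_zero]

lemma div_mul_add_sq_le {ε w : ℝ} (hε : 0 < ε) (hw : 2 * ε ≤ w) (hw1 : w ≤ 1) :
    2 * ε / w * (w + 2 * ε) ^ 2 ≤ 8 * ε :=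
  have hw_pos : 0 < w := by linarith
  calc 2 * ε / w * (w + 2 * ε) ^ 2 ≤ 2 * ε / w * (2 * w) ^ 2 := by gcongr; linarith
    _ = 8 * ε * w := by field_simp; ring
    _ ≤ 8 * ε := by nlinarith

section MaxExcept

variable {ι : Type*} [Fintype ι] [DecidableEq ι]

noncomputable def maxExcept (x : ι → ℝ) (i : ι) : ℝ := ⨆ k : ({i}ᶜ : Finset ι), x k

lemma le_maxExcept (x : ι → ℝ) {i k : ι} (hk : k ≠ i) : x k ≤ maxExcept x i :=
  le_ciSup (f := fun k : ({i}ᶜ : Finset ι) ↦ x k) (Set.finite_range _).bddAbove ⟨k, by simpa⟩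

-- The witness `j` is needed because `⨆` over an empty index type is `0`.
lemma maxExcept_le {x : ι → ℝ} {i j : ι} (hj : j ≠ i) {c : ℝ} (h : ∀ k, k ≠ i → x k ≤ c) :
    maxExcept x i ≤ c :=
  have : Nonempty ({i}ᶜ : Finset ι) := ⟨⟨j, by simpa⟩⟩
  ciSup_le fun k ↦ h k (Finset.mem_compl.mp k.2 <| Finset.mem_singleton.mpr ·)

lemma near_maxExcept_of_forall_le {x : ι → ℝ} {i j : ι} (hij : i ≠ j) (hmax : ∀ k, x k ≤ x j)
    {δ : ℝ} (hnear : x j - δ ≤ x i) : x i ≤ maxExcept x i ∧ maxExcept x i ≤ x i + δ := by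
  have hj : x j ≤ maxExcept x i := le_maxExcept x hij.symm
  have hM : maxExcept x i ≤ x j := maxExcept_le hij.symm fun k _ ↦ hmax k
  constructor <;> linarith [hmax i]

variable {Ω : Type*} [MeasurableSpace Ω] {μ : Measure Ω} {T : ι → Ω → ℝ} (w : ι → ℝ)

lemma measurable_maxExcept (hT : ∀ k, Measurable (T k)) (i : ι) :
    Measurable fun ω ↦ maxExcept (fun k ↦ w k * T k ω) i :=
  Measurable.iSup fun k ↦ (hT k).const_mul _

lemma ProbabilityTheory.iIndepFun.indepFun_maxExcept (hT_indep : iIndepFun T μ)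
    (hT : ∀ k, Measurable (T k)) (i : ι) :
    IndepFun (T i) (fun ω ↦ maxExcept (fun k ↦ w k * T k ω) i) μ := by
  have hφ : Measurable fun z : ({i} : Finset ι) → ℝ ↦ z ⟨i, Finset.mem_singleton_self i⟩ :=
    measurable_pi_apply _
  have hψ : Measurable fun z : ({i}ᶜ : Finset ι) → ℝ ↦ ⨆ k : ({i}ᶜ : Finset ι), w k * z k :=
    Measurable.iSup fun k ↦ (measurable_pi_apply k).const_mul _
  exact (hT_indep.indepFun_finset {i} {i}ᶜ disjoint_compl_right hT).comp hφ hψ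

lemma measure_maxExcept_le_le_ofReal_sq (hT_indep : iIndepFun T μ) (hT : ∀ k, Measurable (T k))
    (hT_unif : ∀ k, μ.map (T k) = volume.restrict (Icc 0 1)) {i k₁ k₂ : ι}
    (hk₁ : k₁ ≠ i) (hk₂ : k₂ ≠ i) (h12 : k₁ ≠ k₂) (hw₁ : w k₁ = 1) (hw₂ : w k₂ = 1) (c : ℝ) :
    μ {ω | maxExcept (fun k ↦ w k * T k ω) i ≤ c} ≤ ENNReal.ofReal c ^ 2 :=
  calc μ {ω | maxExcept (fun k ↦ w k * T k ω) i ≤ c}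
      ≤ μ (T k₁ ⁻¹' Iic c ∩ T k₂ ⁻¹' Iic c) := measure_mono fun ω hω ↦
        ⟨by simpa [hw₁] using (le_maxExcept _ hk₁).trans hω,
          by simpa [hw₂] using (le_maxExcept _ hk₂).trans hω⟩
    _ = μ (T k₁ ⁻¹' Iic c) * μ (T k₂ ⁻¹' Iic c) :=
        (hT_indep.indepFun h12).measure_inter_preimage_eq_mul _ _ measurableSet_Iic
          measurableSet_Iic
    _ ≤ ENNReal.ofReal c * ENNReal.ofReal c :=
        mul_le_mul' (measure_preimage_Iic_le_of_map_eq_uniform (hT k₁) (hT_unif k₁) c)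
          (measure_preimage_Iic_le_of_map_eq_uniform (hT k₂) (hT_unif k₂) c)
    _ = ENNReal.ofReal c ^ 2 := (sq _).symm

lemma measure_near_maxExcept_le [IsProbabilityMeasure μ] (hT_indep : iIndepFun T μ)
    (hT : ∀ k, Measurable (T k)) (hT_unif : ∀ k, μ.map (T k) = volume.restrict (Icc 0 1))
    {i k₁ k₂ : ι} (hwi : w i ∈ Icc 0 1) (hk₁ : k₁ ≠ i) (hk₂ : k₂ ≠ i) (h12 : k₁ ≠ k₂)
    (hw₁ : w k₁ = 1) (hw₂ : w k₂ = 1) {ε : ℝ} (hε : 0 < ε) :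
    μ {ω | w i * T i ω ≤ maxExcept (fun k ↦ w k * T k ω) i ∧
      maxExcept (fun k ↦ w k * T k ω) i ≤ w i * T i ω + 2 * ε} ≤ ENNReal.ofReal (8 * ε) := by
  obtain ⟨hw0, hw1⟩ := hwi
  rcases lt_or_ge (1 / 2) ε with hε_large | hε_small
  · exact prob_le_one.trans (ENNReal.one_le_ofReal.mpr (by linarith))
  have : IsProbabilityMeasure (μ.map (T i)) := Measure.isProbabilityMeasure_map (hT i).aemeasurable
  set s : Set (ℝ × ℝ) := {p | w i * p.1 ≤ p.2 ∧ p.2 ≤ w i * p.1 + 2 * ε}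
  have hs : MeasurableSet s :=
    (measurableSet_le (by fun_prop : Measurable fun p : ℝ × ℝ ↦ w i * p.1) measurable_snd).inter
      (measurableSet_le measurable_snd (by fun_prop : Measurable fun p : ℝ × ℝ ↦ w i * p.1 + 2 * ε))
  have h_slice_zero : ∀ c ∉ Iic (w i + 2 * ε), μ.map (T i) ((·, c) ⁻¹' s) = 0 := by
    intro c hc
    rw [hT_unif, Measure.restrict_apply' measurableSet_Icc,
      ← measure_empty (μ := (volume : Measure ℝ))]
    congr 1
    refine eq_empty_of_forall_notMem fun t ⟨⟨_, (ht : c ≤ w i * t + 2 * ε)⟩, _, ht1⟩ ↦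
      hc (show c ≤ w i + 2 * ε by nlinarith [mul_le_mul_of_nonneg_left ht1 hw0])
  have h_bound : ∀ b, (∀ c, μ.map (T i) ((·, c) ⁻¹' s) ≤ b) →
      μ ((fun ω ↦ (T i ω, maxExcept (fun k ↦ w k * T k ω) i)) ⁻¹' s) ≤
        b * ENNReal.ofReal ((w i + 2 * ε) ^ 2) := by
    intro b hb
    rw [ENNReal.ofReal_pow (by linarith)]
    calc _ ≤ b * μ ((fun ω ↦ maxExcept (fun k ↦ w k * T k ω) i) ⁻¹' Iic (w i + 2 * ε)) :=
          (hT_indep.indepFun_maxExcept w hT i).measure_preimage_le_mul_of_slice_le (hT i)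
            (measurable_maxExcept w hT i) hs measurableSet_Iic hb h_slice_zero
      _ ≤ _ := by
          gcongr
          exact measure_maxExcept_le_le_ofReal_sq w hT_indep hT hT_unif hk₁ hk₂ h12 hw₁ hw₂ _
  -- For small `w i` the slice bound `2ε / w i` is useless and `1` is used instead.
  rcases le_or_gt (2 * ε) (w i) with hw_large | hw_small
  · have hw_pos : 0 < w i := by linarith
    refine (h_bound (ENNReal.ofReal (2 * ε / w i)) fun c ↦ ?_).trans ?_
    · calc μ.map (T i) ((·, c) ⁻¹' s) ≤ volume ((·, c) ⁻¹' s) := by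
            rw [hT_unif]; exact Measure.restrict_le_self _
        _ = ENNReal.ofReal (2 * ε / w i) := Real.volume_setOf_mul_le_le_mul_add hw_pos c _
    · rw [← ENNReal.ofReal_mul (by positivity)]
      exact ENNReal.ofReal_le_ofReal (div_mul_add_sq_le hε hw_large hw1)
  · refine (h_bound 1 fun c ↦ prob_le_one).trans ?_
    rw [one_mul]
    exact ENNReal.ofReal_le_ofReal (by nlinarith)

end MaxExcept

/-- Let `n, f` be natural numbers with `f ≥ 1` and `n ≥ 3f + 1`, and `ε > 0` a real.
Let `w_1, …, w_n ∈ [0,1]`, and suppose there is a set `S ⊆ {1,…,n}` with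
`|S| ≥ n - f` such that `w_i = 1` for all `i ∈ S`.  Let `T_1, …, T_n` be independent
random variables, each uniformly distributed on `[0,1]`, and set `X_i = w_i · T_i`.
Then the probability that there exist distinct indices `i ≠ j` with
`X_j = max_k X_k` and `X_i ≥ X_j - 2ε` is at most `8nε`. -/
theorem near_maximum_prob_bound {Ω : Type*} [MeasurableSpace Ω] (μ : Measure Ω)
    [IsProbabilityMeasure μ] (n f : ℕ) (hf : 1 ≤ f) (hn : 3 * f + 1 ≤ n)
    (ε : ℝ) (hε : 0 < ε)
    (w : Fin n → ℝ) (hw : ∀ i, w i ∈ Set.Icc (0 : ℝ) 1)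
    (S : Finset (Fin n)) (hS : n - f ≤ S.card) (hSone : ∀ i ∈ S, w i = 1)
    (T : Fin n → Ω → ℝ) (hTmeas : ∀ i, Measurable (T i))
    (hTindep : iIndepFun T μ)
    (hTunif : ∀ i, μ.map (T i) = volume.restrict (Set.Icc (0 : ℝ) 1)) :
    μ {ω | ∃ i j, i ≠ j ∧ (∀ k, w k * T k ω ≤ w j * T j ω) ∧
        w j * T j ω - 2 * ε ≤ w i * T i ω}
      ≤ ENNReal.ofReal (8 * n * ε) := by
  have h_unit_pair : ∀ i, ∃ k₁ k₂, k₁ ≠ i ∧ k₂ ≠ i ∧ k₁ ≠ k₂ ∧ w k₁ = 1 ∧ w k₂ = 1 := by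
    intro i
    have : 1 < (S.erase i).card := by
      have := Finset.pred_card_le_card_erase (s := S) (a := i)
      omega
    obtain ⟨k₁, hk₁, k₂, hk₂, h12⟩ := Finset.one_lt_card.mp this
    exact ⟨k₁, k₂, Finset.ne_of_mem_erase hk₁, Finset.ne_of_mem_erase hk₂, h12,
      hSone _ (Finset.mem_of_mem_erase hk₁), hSone _ (Finset.mem_of_mem_erase hk₂)⟩
  calc _ ≤ μ (⋃ i, {ω | w i * T i ω ≤ maxExcept (fun k ↦ w k * T k ω) i ∧
          maxExcept (fun k ↦ w k * T k ω) i ≤ w i * T i ω + 2 * ε}) :=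
        measure_mono <| by
          rintro ω ⟨i, j, hij, hmax, hnear⟩
          exact mem_iUnion.mpr
            ⟨i, near_maxExcept_of_forall_le (x := fun k ↦ w k * T k ω) hij hmax hnear⟩
    _ ≤ ∑ _i : Fin n, ENNReal.ofReal (8 * ε) := by
        refine (measure_iUnion_fintype_le _ _).trans (Finset.sum_le_sum fun i _ ↦ ?_)
        obtain ⟨k₁, k₂, hk₁, hk₂, h12, hw₁, hw₂⟩ := h_unit_pair i
        exact measure_near_maxExcept_le w hTindep hTmeas hTunif (hw i) hk₁ hk₂ h12 hw₁ hw₂ hε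
    _ = ENNReal.ofReal (8 * n * ε) := by
        rw [Finset.sum_const, Finset.card_univ, Fintype.card_fin, nsmul_eq_mul,
          ← ENNReal.ofReal_natCast, ← ENNReal.ofReal_mul (Nat.cast_nonneg n)]
        ring_nf
end

section
/- Let n be a natural number, let ε and v be real numbers with 0 < ε ≤ 1/16 and 0 < v < 1, and set ε' = (16/15)·ε·(1−v). Let T_1,…,T_n ∈ [0,1] and let w¹, wᴹ, wᵐ : {1,…,n} → [0,1] satisfy, for every i: wᵐ_i ≤ w¹_i ≤ wᴹ_i, wᴹ_i ≤ w¹_i + ε, and wᵐ_i ≥ w¹_i − ε. Fix an index M. If Calibrate(wᵐ_M)·T_M > v and for every i ≠ M we have Calibrate(w¹_i)·T_i + ε' < Calibrate(w¹_M)·T_M − ε', then for every i ≠ M: Calibrate(wᴹ_i)·T_i < Calibrate(wᵐ_M)·T_M. -/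
/-- The weight-calibration function with parameters `ε ∈ (0, 1/16]` and `v ∈ [0,1]`:
`Calibrate 0 = 0` and `Calibrate w = (w - ε)/(1 - ε) + v · (1 - w)/(1 - ε)` for
`0 < w ≤ 1`. -/
noncomputable def calibrate (ε v w : ℝ) : ℝ :=
  if w = 0 then 0 else (w - ε) / (1 - ε) + v * ((1 - w) / (1 - ε))

/-!
Away from `0`, `calibrate` is affine with slope `(1 - v)/(1 - ε) ≤ (16/15)(1 - v)`, so moving a
weight by at most `ε` moves its calibrated score by at most `ε'`.  The other scores therefore rise
by at most `ε'` and the winner's falls by at most `ε'`, which the gap `2ε'` absorbs.  A weight that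
jumps off `0` lands in `(0, ε]`, where `calibrate ≤ v`, and `v` is beaten by hypothesis.
-/

section Calibrate

variable {ε v : ℝ}

@[simp]
lemma calibrate_zero : calibrate ε v 0 = 0 := if_pos rfl

lemma calibrate_of_ne_zero {w : ℝ} (hε : ε ≠ 1) (hw : w ≠ 0) :
    calibrate ε v w = v + (1 - v) * ((w - ε) / (1 - ε)) := by
  have : 1 - ε ≠ 0 := sub_ne_zero.mpr (Ne.symm hε)
  rw [calibrate, if_neg hw]
  field_simp
  ring

lemma calibrate_le_of_le (hv0 : 0 ≤ v) (hv1 : v ≤ 1) (hε : ε < 1) {w : ℝ} (hw : w ≤ ε) :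
    calibrate ε v w ≤ v := by
  rcases eq_or_ne w 0 with rfl | hw0
  · simpa using hv0
  rw [calibrate_of_ne_zero hε.ne hw0, add_le_iff_nonpos_right]
  exact mul_nonpos_of_nonneg_of_nonpos (by linarith)
    (div_nonpos_of_nonpos_of_nonneg (by linarith) (by linarith))

lemma calibrate_sub_calibrate {x y : ℝ} (hε : ε ≠ 1) (hx : x ≠ 0) (hy : y ≠ 0) :
    calibrate ε v y - calibrate ε v x = (1 - v) * ((y - x) / (1 - ε)) := by
  rw [calibrate_of_ne_zero hε hx, calibrate_of_ne_zero hε hy]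
  ring

lemma calibrate_le_calibrate {x y : ℝ} (hε : ε < 1) (hv : v ≤ 1) (hx : x ≠ 0) (hy : y ≠ 0)
    (hxy : x ≤ y) : calibrate ε v x ≤ calibrate ε v y := by
  rw [← sub_nonneg, calibrate_sub_calibrate hε.ne hx hy]
  exact mul_nonneg (by linarith) (div_nonneg (by linarith) (by linarith))

lemma calibrate_sub_calibrate_le {x y : ℝ} (hε0 : 0 ≤ ε) (hε : ε ≤ 1 / 16) (hv : v ≤ 1)
    (hx : x ≠ 0) (hy : y ≠ 0) (hyx : y ≤ x + ε) :
    calibrate ε v y - calibrate ε v x ≤ 16 / 15 * ε * (1 - v) := by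
  have h1ε : 0 < 1 - ε := by linarith
  have hslope : (y - x) / (1 - ε) ≤ 16 / 15 * ε := by
    rw [div_le_iff₀ h1ε]
    nlinarith
  rw [calibrate_sub_calibrate (by linarith) hx hy, mul_comm (16 / 15 * ε)]
  exact mul_le_mul_of_nonneg_left hslope (by linarith)

lemma calibrate_mul_le_calibrate_mul_add {x y T : ℝ} (hε0 : 0 ≤ ε) (hε : ε ≤ 1 / 16)
    (hv : v ≤ 1) (hx : x ≠ 0) (hy : y ≠ 0) (hxy : x ≤ y) (hyx : y ≤ x + ε)
    (hT : T ∈ Set.Icc (0 : ℝ) 1) :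
    calibrate ε v y * T ≤ calibrate ε v x * T + 16 / 15 * ε * (1 - v) := by
  have hmono : calibrate ε v x ≤ calibrate ε v y :=
    calibrate_le_calibrate (by linarith) hv hx hy hxy
  have hscaled : (calibrate ε v y - calibrate ε v x) * T ≤ calibrate ε v y - calibrate ε v x :=
    mul_le_of_le_one_right (sub_nonneg.mpr hmono) hT.2
  linarith [calibrate_sub_calibrate_le hε0 hε hv hx hy hyx]

end Calibrate

theorem calibrated_winner_stable_general (n : ℕ) (ε v : ℝ) (hε0 : 0 < ε) (hε : ε ≤ 1 / 16)
    (hv0 : 0 < v) (hv1 : v < 1)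
    (ε' : ℝ) (hε' : ε' = 16 / 15 * ε * (1 - v))
    (T : Fin n → ℝ) (hT : ∀ i, T i ∈ Set.Icc (0 : ℝ) 1)
    (w1 wM wm : Fin n → ℝ)
    (hw1 : ∀ i, w1 i ∈ Set.Icc (0 : ℝ) 1)
    (hwm : ∀ i, wm i ∈ Set.Icc (0 : ℝ) 1)
    (horder : ∀ i, wm i ≤ w1 i ∧ w1 i ≤ wM i)
    (hMub : ∀ i, wM i ≤ w1 i + ε) (hmlb : ∀ i, w1 i - ε ≤ wm i)
    (M : Fin n)
    (hMv : v < calibrate ε v (wm M) * T M)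
    (hgap : ∀ i, i ≠ M →
      calibrate ε v (w1 i) * T i + ε' < calibrate ε v (w1 M) * T M - ε') :
    ∀ i, i ≠ M → calibrate ε v (wM i) * T i < calibrate ε v (wm M) * T M := by
  intro i hi
  have hwmM : wm M ≠ 0 := by
    rintro h
    simp only [h, calibrate_zero, zero_mul] at hMv
    linarith
  have hw1M : w1 M ≠ 0 := by
    have := (hwm M).1
    have := (horder M).1
    intro h
    exact hwmM (by linarith)
  by_cases hw1i : w1 i = 0
  · have hsmall : calibrate ε v (wM i) ≤ v :=
      calibrate_le_of_le hv0.le hv1.le (by linarith) (by linarith [hMub i])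
    calc calibrate ε v (wM i) * T i ≤ v * T i := mul_le_mul_of_nonneg_right hsmall (hT i).1
      _ ≤ v := mul_le_of_le_one_right hv0.le (hT i).2
      _ < calibrate ε v (wm M) * T M := hMv
  have hwMi : wM i ≠ 0 := by
    have := (hw1 i).1
    have := (horder i).2
    intro h
    exact hw1i (by linarith)
  have hrise := calibrate_mul_le_calibrate_mul_add hε0.le hε hv1.le hw1i hwMi (horder i).2
    (hMub i) (hT i)
  have hfall := calibrate_mul_le_calibrate_mul_add hε0.le hε hv1.le hwmM hw1M (horder M).1
    (by linarith [hmlb M]) (hT M)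
  linarith [hgap i hi]

/-- Let `n` be a natural number, `ε, v` reals with `0 < ε ≤ 1/16`, `0 < v < 1`, and
`ε' = (16/15) · ε · (1 - v)`.  Let `T_1, …, T_n ∈ [0,1]` and
`w¹, wᴹ, wᵐ : {1,…,n} → [0,1]` with `wᵐ_i ≤ w¹_i ≤ wᴹ_i`, `wᴹ_i ≤ w¹_i + ε`,
`wᵐ_i ≥ w¹_i − ε` for every `i`.  Fix an index `M`.  If
`Calibrate(wᵐ_M)·T_M > v` and for every `i ≠ M` we have
`Calibrate(w¹_i)·T_i + ε' < Calibrate(w¹_M)·T_M − ε'`, then for every `i ≠ M`: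
`Calibrate(wᴹ_i)·T_i < Calibrate(wᵐ_M)·T_M`. -/
theorem calibrated_winner_stable (n : ℕ) (ε v : ℝ) (hε0 : 0 < ε) (hε : ε ≤ 1 / 16)
    (hv0 : 0 < v) (hv1 : v < 1)
    (ε' : ℝ) (hε' : ε' = 16 / 15 * ε * (1 - v))
    (T : Fin n → ℝ) (hT : ∀ i, T i ∈ Set.Icc (0 : ℝ) 1)
    (w1 wM wm : Fin n → ℝ)
    (hw1 : ∀ i, w1 i ∈ Set.Icc (0 : ℝ) 1)
    (hwM : ∀ i, wM i ∈ Set.Icc (0 : ℝ) 1)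
    (hwm : ∀ i, wm i ∈ Set.Icc (0 : ℝ) 1)
    (horder : ∀ i, wm i ≤ w1 i ∧ w1 i ≤ wM i)
    (hMub : ∀ i, wM i ≤ w1 i + ε) (hmlb : ∀ i, w1 i - ε ≤ wm i)
    (M : Fin n)
    (hMv : v < calibrate ε v (wm M) * T M)
    (hgap : ∀ i, i ≠ M →
      calibrate ε v (w1 i) * T i + ε' < calibrate ε v (w1 M) * T M - ε') :
    ∀ i, i ≠ M → calibrate ε v (wM i) * T i < calibrate ε v (wm M) * T M :=
  calibrated_winner_stable_general n ε v hε0 hε hv0 hv1 ε' hε' T hT w1 wM wm hw1 hwm horder hMub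
    hmlb M hMv hgap
end

section
/- For all natural numbers n and m with m ≤ n, the list C_{n,m} contains every binary string of length n with exactly m ones exactly once; in particular, C_{n,m} has no duplicate entries and its length is the binomial coefficient C(n, m). -/
/-- The Gray-style code `C_{n,m}`: a list of binary strings (lists of Booleans,
`true` = 1, `false` = 0).  `C_{0,0}` is the one-element list containing the empty
string, `C_{n,0} = [0^n]`, `C_{n,n} = [1^n]` for `n > 0`, and for `0 < m < n`,
`C_{n,m}` is the concatenation of the list obtained by prepending `0` to every
string of `C_{n-1,m}` with the reverse of the list obtained by prepending `1` to
every string of `C_{n-1,m-1}`. -/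
def grayCode : ℕ → ℕ → List (List Bool)
  | 0, _ => [[]]
  | n + 1, 0 => [List.replicate (n + 1) false]
  | n + 1, m + 1 =>
    if m + 1 = n + 1 then [List.replicate (n + 1) true]
    else (grayCode n (m + 1)).map (List.cons false) ++
      ((grayCode n m).map (List.cons true)).reverse

/-! Induction along the recursion: for `0 < m < n` the two halves of `C_{n,m}` are exactly
the strings of the code starting with `0` and with `1`, so they are disjoint, their union
is the whole level set, and their lengths add up by Pascal's rule. -/

lemma List.eq_replicate_false_iff {s : List Bool} {n : ℕ} :
    s = List.replicate n false ↔ s.length = n ∧ s.count true = 0 := by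
  simp [List.eq_replicate_iff, List.count_eq_zero]

lemma List.eq_replicate_true_iff {s : List Bool} {n : ℕ} :
    s = List.replicate n true ↔ s.length = n ∧ s.count true = n := by
  rw [List.eq_replicate_iff, and_congr_right_iff]
  rintro rfl
  rw [List.count_eq_length]
  simp [eq_comm]

lemma grayCode_succ_succ {n m : ℕ} (h : m ≠ n) :
    grayCode (n + 1) (m + 1) = (grayCode n (m + 1)).map (List.cons false) ++
      ((grayCode n m).map (List.cons true)).reverse := by
  simp [grayCode, h]

lemma grayCode_self : ∀ n : ℕ, grayCode n n = [List.replicate n true]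
  | 0 => rfl
  | n + 1 => by simp [grayCode]

lemma nodup_grayCode : ∀ n m : ℕ, (grayCode n m).Nodup
  | 0, _ => List.nodup_singleton _
  | n + 1, 0 => List.nodup_singleton _
  | n + 1, m + 1 => by
    by_cases h : m = n
    · subst h
      exact grayCode_self (m + 1) ▸ List.nodup_singleton _
    rw [grayCode_succ_succ h]
    refine ((nodup_grayCode n (m + 1)).map List.cons_injective).append
      (List.nodup_reverse.2 ((nodup_grayCode n m).map List.cons_injective)) ?_
    simp [List.disjoint_left]

lemma length_grayCode : ∀ {n m : ℕ}, m ≤ n → (grayCode n m).length = n.choose m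
  | 0, _, h => by simp [Nat.le_zero.1 h, grayCode]
  | n + 1, 0, _ => by simp [grayCode]
  | n + 1, m + 1, h => by
    by_cases hmn : m = n
    · simp [hmn, grayCode_self]
    rw [grayCode_succ_succ hmn]
    simp [length_grayCode (show m + 1 ≤ n by omega), length_grayCode (show m ≤ n by omega),
      Nat.choose_succ_succ, Nat.add_comm]

lemma mem_grayCode {s : List Bool} : ∀ {n m : ℕ}, m ≤ n →
    (s ∈ grayCode n m ↔ s.length = n ∧ s.count true = m)
  | 0, _, h => by simp +contextual [Nat.le_zero.1 h, grayCode, List.length_eq_zero_iff]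
  | n + 1, 0, _ => by simp [grayCode, List.eq_replicate_false_iff]
  | n + 1, m + 1, h => by
    by_cases hmn : m = n
    · simp [hmn, grayCode_self, List.eq_replicate_true_iff]
    rw [grayCode_succ_succ hmn]
    rcases s with _ | ⟨_ | _, t⟩
    · simp
    · simp [mem_grayCode (show m + 1 ≤ n by omega)]
    · simp [mem_grayCode (show m ≤ n by omega)]

/-- For all natural numbers `n` and `m` with `m ≤ n`, the list `C_{n,m}` contains
every binary string of length `n` with exactly `m` ones exactly once; in
particular, `C_{n,m}` has no duplicate entries and its length is the binomial
coefficient `C(n, m)`. -/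
theorem grayCode_complete_nodup (n m : ℕ) (h : m ≤ n) :
    (∀ s : List Bool, s.length = n → s.count true = m → (grayCode n m).count s = 1) ∧
    (grayCode n m).Nodup ∧ (grayCode n m).length = n.choose m :=
  ⟨fun _ hs hc => List.count_eq_one_of_mem (nodup_grayCode n m) ((mem_grayCode h).2 ⟨hs, hc⟩),
    nodup_grayCode n m, length_grayCode h⟩
end
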